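/- The truncated Gaussian activation λ(α) = α + N(α)/Φ(α) is strictly positive for all real α. -/
import Mathlib


open Real MeasureTheory

noncomputable def gaussPdf (x : ℝ) : ℝ := Real.exp (-x ^ 2 / 2) / Real.sqrt (2 * Real.pi)

noncomputable def gaussCdf (x : ℝ) : ℝ := ∫ t in Set.Iic x, gaussPdf t

lemma gaussPdf_pos (x : ℝ) : 0 < gaussPdf x := by
  unfold gaussPdf
  positivity

lemma integrable_gaussPdf : Integrable gaussPdf := by
  have h : gaussPdf = fun x => Real.exp (-(1/2) * x ^ 2) / Real.sqrt (2 * Real.pi) := by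
    funext x; unfold gaussPdf; ring_nf
  rw [h]
  exact (integrable_exp_neg_mul_sq (by norm_num)).div_const _

lemma integrable_mul_gaussPdf : Integrable (fun x => x * gaussPdf x) := by
  have h : (fun x => x * gaussPdf x)
      = fun x => (x * Real.exp (-(1/2) * x ^ 2)) / Real.sqrt (2 * Real.pi) := by
    funext x; unfold gaussPdf; ring_nf
  rw [h]
  exact (integrable_mul_exp_neg_mul_sq (by norm_num)).div_const _

lemma integrable_neg_mul_gaussPdf : Integrable (fun x => -x * gaussPdf x) := by
  exact integrable_mul_gaussPdf.neg.congr
    (Filter.Eventually.of_forall fun x => (neg_mul x (gaussPdf x)).symm)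

lemma hasDerivAt_gaussPdf (x : ℝ) : HasDerivAt gaussPdf (-x * gaussPdf x) x := by
  have h1 : HasDerivAt (fun x : ℝ => -x ^ 2 / 2) (-x) x := by
    have := ((hasDerivAt_pow 2 x).neg).div_const 2
    simpa using this.congr_deriv (by ring)
  have h2 := (h1.exp).div_const (Real.sqrt (2 * Real.pi))
  have : Real.exp (-x ^ 2 / 2) * -x / Real.sqrt (2 * Real.pi) = -x * gaussPdf x := by
    unfold gaussPdf; ring
  rw [this] at h2
  exact h2

lemma tendsto_gaussPdf_atBot : Filter.Tendsto gaussPdf Filter.atBot (nhds 0) := by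
  have hsq : Filter.Tendsto (fun x : ℝ => x ^ 2) Filter.atBot Filter.atTop := by
    have h := (Filter.tendsto_pow_atTop (α := ℝ) (n := 2) two_ne_zero).comp
      Filter.tendsto_neg_atBot_atTop
    refine h.congr fun x => ?_
    simp [Function.comp]
  have h1 : Filter.Tendsto (fun x : ℝ => -x ^ 2 / 2) Filter.atBot Filter.atBot := by
    apply Filter.Tendsto.atBot_div_const (by norm_num)
    exact Filter.tendsto_neg_atTop_atBot.comp hsq
  have h2 := (Real.tendsto_exp_atBot.comp h1).div_const (Real.sqrt (2 * Real.pi))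
  show Filter.Tendsto (fun x => Real.exp (-x ^ 2 / 2) / Real.sqrt (2 * Real.pi))
    Filter.atBot (nhds 0)
  simpa [Function.comp_def] using h2

lemma integral_neg_mul_gaussPdf (α : ℝ) :
    ∫ t in Set.Iic α, -t * gaussPdf t = gaussPdf α := by
  have := integral_Iic_of_hasDerivAt_of_tendsto' (a := α) (f := gaussPdf)
    (f' := fun t => -t * gaussPdf t) (m := 0)
    (fun x _ => hasDerivAt_gaussPdf x)
    integrable_neg_mul_gaussPdf.integrableOn
    tendsto_gaussPdf_atBot
  simpa using this

lemma gaussCdf_pos (α : ℝ) : 0 < gaussCdf α := by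
  unfold gaussCdf
  rw [setIntegral_pos_iff_support_of_nonneg_ae
    (Filter.Eventually.of_forall (fun x => (gaussPdf_pos x).le))
    integrable_gaussPdf.integrableOn]
  have : Function.support gaussPdf ∩ Set.Iic α = Set.Iic α := by
    ext x
    simp [Function.support, (gaussPdf_pos x).ne']
  rw [this]
  simp [Real.volume_Iic]

theorem tg_activation_pos (α : ℝ) :
    0 < α + gaussPdf α / gaussCdf α := by
  have hcdf := gaussCdf_pos α
  have key : -α * gaussCdf α < gaussPdf α := by
    rw [← integral_neg_mul_gaussPdf α]
    have hc : -α * gaussCdf α = ∫ t in Set.Iic α, -α * gaussPdf t := by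
      rw [integral_const_mul]; rfl
    rw [hc, ← sub_pos, ← integral_sub]
    · rw [setIntegral_pos_iff_support_of_nonneg_ae]
      · refine lt_of_lt_of_le ?_ (measure_mono (show Set.Iio α ⊆ _ from ?_))
        · simp [Real.volume_Iio]
        · intro x hx
          have hxα : x < α := hx
          refine ⟨?_, le_of_lt hxα⟩
          simp only [Function.mem_support]
          have heq : -x * gaussPdf x - -α * gaussPdf x = (α - x) * gaussPdf x := by ring
          rw [heq]
          exact ne_of_gt (mul_pos (by linarith) (gaussPdf_pos x))
      · filter_upwards [ae_restrict_mem measurableSet_Iic] with x hx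
        have heq : -x * gaussPdf x - -α * gaussPdf x = (α - x) * gaussPdf x := by ring
        simp only [Pi.zero_apply, heq]
        have h1 := (gaussPdf_pos x).le
        have h2 : x ≤ α := hx
        nlinarith
      · exact (integrable_neg_mul_gaussPdf.integrableOn.sub
          ((integrable_gaussPdf.const_mul (-α)).integrableOn))
    · exact integrable_neg_mul_gaussPdf.integrableOn
    · exact (integrable_gaussPdf.const_mul (-α)).integrableOn
  have hlt : -α < gaussPdf α / gaussCdf α := by
    rw [lt_div_iff₀ hcdf]
    exact key
  linarith
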